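/- arXiv:2405.08625 — 6 statements merged into one kernel-verified Lean document; each statement's English description precedes it below -/
import Mathlib

section
/- For every real α > 0, the sequence 2^(n−2) · (1/2 − α/√n − 1/n)^(n/2 − α√n) · (1/2 + α/√n + 1/n)^(n/2 + α√n), where the powers are real-exponent powers and n ranges over natural numbers large enough that 1/2 − α/√n − 1/n > 0, converges as n → ∞ to e^(2α²)/4. -/
/-!
Put `s = √n` and `u = 2 (α / s + 1 / s²)`: the two bases are `(1 ∓ u) / 2` and the exponents add
up to `s²`, so the expression is `exp L / 4` with
`L = (s²/2 - α s) log (1 - u) + (s²/2 + α s) log (1 + u)`.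
Expanding `log (1 ± u)` to second order, the main terms give exactly `2 α² - 2 / s²`
(because `s u = 2 α + 2 / s`), while the cubic remainders are `O(u³) = O(s⁻³)` against
coefficients `O(s²)`.
-/

open Filter Real Asymptotics Topology

noncomputable def logRemainder (u : ℝ) : ℝ := log (1 + u) - u + u ^ 2 / 2

lemma abs_logRemainder_le {u : ℝ} (hu : |u| < 1) : |logRemainder u| ≤ |u| ^ 3 / (1 - |u|) := by
  have h := abs_log_sub_add_sum_range_le (x := -u) (by rwa [abs_neg]) 2
  simp only [Finset.sum_range_succ, Finset.sum_range_zero, abs_neg, sub_neg_eq_add] at h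
  convert h using 2
  unfold logRemainder
  push_cast
  ring

lemma logRemainder_isBigO : logRemainder =O[𝓝 0] fun u => u ^ 3 := by
  refine IsBigO.of_bound 2 ?_
  filter_upwards [Metric.ball_mem_nhds (0 : ℝ) one_half_pos] with u hu
  rw [Metric.mem_ball, dist_zero_right, norm_eq_abs] at hu
  rw [norm_eq_abs, norm_eq_abs, abs_pow]
  calc |logRemainder u| ≤ |u| ^ 3 / (1 - |u|) := abs_logRemainder_le (by linarith)
    _ ≤ |u| ^ 3 / (1 / 2) := by gcongr; linarith
    _ = 2 * |u| ^ 3 := by ring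

lemma tendsto_mul_logRemainder {ι : Type*} {l : Filter ι} {c v : ι → ℝ}
    (hv : Tendsto v l (𝓝 0)) (hcv : Tendsto (fun i => c i * v i ^ 3) l (𝓝 0)) :
    Tendsto (fun i => c i * logRemainder (v i)) l (𝓝 0) :=
  ((isBigO_refl c l).mul (logRemainder_isBigO.comp_tendsto hv)).trans_tendsto hcv

lemma tendsto_deviation (α : ℝ) : Tendsto (fun s : ℝ => 2 * (α / s + 1 / s ^ 2)) atTop (𝓝 0) := by
  have h : Tendsto (fun t : ℝ => 2 * (α * t + t ^ 2)) (𝓝 0) (𝓝 0) := by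
    simpa using (show Continuous fun t : ℝ => 2 * (α * t + t ^ 2) by fun_prop).tendsto 0
  refine (h.comp tendsto_inv_atTop_zero).congr fun s => ?_
  simp [div_eq_mul_inv]

lemma tendsto_quadratic_mul_deviation_cube (α β : ℝ) :
    Tendsto (fun s : ℝ => (s ^ 2 / 2 + β * s) * (2 * (α / s + 1 / s ^ 2)) ^ 3) atTop (𝓝 0) := by
  have h : Tendsto (fun t : ℝ => (1 / 2 + β * t) * (8 * (α + t) ^ 3 * t)) (𝓝 0) (𝓝 0) := by
    simpa using
      (show Continuous fun t : ℝ => (1 / 2 + β * t) * (8 * (α + t) ^ 3 * t) by fun_prop).tendsto 0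
  refine (h.comp tendsto_inv_atTop_zero).congr' ?_
  filter_upwards [eventually_ne_atTop 0] with s hs
  simp only [Function.comp]
  field_simp
  ring

lemma log_sum_eq (α : ℝ) {s : ℝ} (hs : s ≠ 0) :
    let u := 2 * (α / s + 1 / s ^ 2)
    (s ^ 2 / 2 - α * s) * log (1 - u) + (s ^ 2 / 2 + α * s) * log (1 + u) =
      2 * α ^ 2 - 2 / s ^ 2 + (s ^ 2 / 2 - α * s) * logRemainder (-u) +
        (s ^ 2 / 2 + α * s) * logRemainder u := by
  intro u
  simp only [logRemainder, ← sub_eq_add_neg, u]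
  field_simp
  ring

lemma tendsto_log_sum (α : ℝ) :
    Tendsto (fun s : ℝ => (s ^ 2 / 2 - α * s) * log (1 - 2 * (α / s + 1 / s ^ 2)) +
      (s ^ 2 / 2 + α * s) * log (1 + 2 * (α / s + 1 / s ^ 2))) atTop (𝓝 (2 * α ^ 2)) := by
  have hu := tendsto_deviation α
  have hu_neg := hu.neg
  have hcube_neg := (tendsto_quadratic_mul_deviation_cube α (-α)).neg
  rw [neg_zero] at hu_neg hcube_neg
  have hminus := tendsto_mul_logRemainder hu_neg (c := fun s => s ^ 2 / 2 - α * s)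
    (hcube_neg.congr fun s => by ring)
  have hplus := tendsto_mul_logRemainder hu (tendsto_quadratic_mul_deviation_cube α α)
  have hmain : Tendsto (fun s : ℝ => 2 * α ^ 2 - 2 / s ^ 2) atTop (𝓝 (2 * α ^ 2)) := by
    have hinv := (tendsto_pow_atTop (α := ℝ) two_ne_zero).inv_tendsto_atTop
    simpa [div_eq_mul_inv] using tendsto_const_nhds.sub (hinv.const_mul 2)
  have := (hmain.add hminus).add hplus
  simp only [add_zero] at this
  refine this.congr' ?_
  filter_upwards [eventually_ne_atTop 0] with s hs
  exact (log_sum_eq α hs).symm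

lemma two_rpow_mul_half_rpow_mul_half_rpow {a b : ℝ} (ha : 0 < a) (hb : 0 < b) (p q : ℝ) :
    (2 : ℝ) ^ (p + q - 2) * (a / 2) ^ p * (b / 2) ^ q = exp (p * log a + q * log b) / 4 := by
  rw [rpow_def_of_pos two_pos, rpow_def_of_pos (half_pos ha), rpow_def_of_pos (half_pos hb),
    ← exp_add, ← exp_add, log_div ha.ne' two_ne_zero, log_div hb.ne' two_ne_zero]
  rw [show log 2 * (p + q - 2) + (log a - log 2) * p + (log b - log 2) * q =
    (p * log a + q * log b) - 2 * log 2 by ring, exp_sub, ← log_rpow two_pos,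
    exp_log (by positivity)]
  norm_num

lemma tendsto_two_rpow_mul_rpow_mul_rpow (α : ℝ) :
    Tendsto (fun s : ℝ => (2 : ℝ) ^ (s ^ 2 - 2) *
        (1 / 2 - α / s - 1 / s ^ 2) ^ (s ^ 2 / 2 - α * s) *
        (1 / 2 + α / s + 1 / s ^ 2) ^ (s ^ 2 / 2 + α * s))
      atTop (𝓝 (exp (2 * α ^ 2) / 4)) := by
  refine (((continuous_exp.tendsto _).comp (tendsto_log_sum α)).div_const 4).congr' ?_
  have hu := tendsto_deviation α
  filter_upwards [hu.eventually (gt_mem_nhds one_pos), hu.eventually (lt_mem_nhds neg_one_lt_zero)]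
    with s hu₁ hu₂
  rw [Function.comp_apply, ← two_rpow_mul_half_rpow_mul_half_rpow (by linarith) (by linarith)]
  congr 3 <;> ring

theorem tendsto_interval_length_ratio_general (α : ℝ) :
    Filter.Tendsto (fun n : ℕ =>
      (2 : ℝ) ^ ((n : ℝ) - 2) *
        (1 / 2 - α / Real.sqrt n - 1 / n) ^ ((n : ℝ) / 2 - α * Real.sqrt n) *
        (1 / 2 + α / Real.sqrt n + 1 / n) ^ ((n : ℝ) / 2 + α * Real.sqrt n))
      Filter.atTop (nhds (Real.exp (2 * α ^ 2) / 4)) := by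
  refine ((tendsto_two_rpow_mul_rpow_mul_rpow α).comp
    (tendsto_sqrt_atTop.comp tendsto_natCast_atTop_atTop)).congr fun n => ?_
  simp only [Function.comp, sq_sqrt n.cast_nonneg]

/-- For every `α > 0`,
`2^(n-2) · (1/2 - α/√n - 1/n)^(n/2 - α√n) · (1/2 + α/√n + 1/n)^(n/2 + α√n)`
(real-exponent powers) converges to `e^(2α²)/4` as `n → ∞`. -/
theorem tendsto_interval_length_ratio (α : ℝ) (hα : 0 < α) :
    Filter.Tendsto (fun n : ℕ =>
      (2 : ℝ) ^ ((n : ℝ) - 2) *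
        (1 / 2 - α / Real.sqrt n - 1 / n) ^ ((n : ℝ) / 2 - α * Real.sqrt n) *
        (1 / 2 + α / Real.sqrt n + 1 / n) ^ ((n : ℝ) / 2 + α * Real.sqrt n))
      Filter.atTop (nhds (Real.exp (2 * α ^ 2) / 4)) :=
  tendsto_interval_length_ratio_general α
end

section
/- For every real α with α > √(ln 2), there exists a natural number N such that for all n ≥ N, (1/2 − α/√n − 1/n)^(n/2 − α√n) · (1/2 + α/√n + 1/n)^(n/2 + α√n) ≥ 2^(−(n−2)). -/
/-!
Write `n = r²` and `t = 2α/r + 2/r²`, so that the two bases are `(1 ∓ t)/2` and the product is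
`2⁻ⁿ · (1 - t²)^(n/2) · ((1 + t)/(1 - t))^(α r)`. The elementary bounds `log (1 - x) ≥ -x/(1 - x)`
and `log ((1 + t)/(1 - t)) ≥ 2t` bound the logarithm of the last two factors from below by an
expression in `r` tending to `-2α² + 4α² = 2α²`, which eventually exceeds `log 4` since `α² > log 2`.
-/

open Filter Real Topology

lemma two_mul_le_log_one_add_sub_log_one_sub {t : ℝ} (h0 : 0 ≤ t) (h1 : t < 1) :
    2 * t ≤ log (1 + t) - log (1 - t) := by
  have hsum := hasSum_log_sub_log_of_abs_lt_one (abs_lt.mpr ⟨by linarith, h1⟩)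
  simpa using le_hasSum hsum 0 fun k _ => by positivity

lemma neg_div_one_sub_le_log_one_sub {x : ℝ} (h : x < 1) : -(x / (1 - x)) ≤ log (1 - x) :=
  calc -(x / (1 - x)) = 1 - (1 - x)⁻¹ := by field_simp [(sub_pos.mpr h).ne']; ring
    _ ≤ log (1 - x) := one_sub_inv_le_log_of_pos (sub_pos.mpr h)

lemma exp_le_one_sub_rpow_mul_one_add_rpow {t m a : ℝ} (ht0 : 0 ≤ t) (ht1 : t < 1)
    (hm : 0 ≤ m) (ha : 0 ≤ a) :
    exp (2 * a * t - m * (t ^ 2 / (1 - t ^ 2))) ≤ (1 - t) ^ (m - a) * (1 + t) ^ (m + a) := by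
  have hsub : 0 < 1 - t := by linarith
  have hadd : 0 < 1 + t := by linarith
  have hsq : -(t ^ 2 / (1 - t ^ 2)) ≤ log (1 - t) + log (1 + t) := by
    rw [← log_mul hsub.ne' hadd.ne']
    convert neg_div_one_sub_le_log_one_sub (x := t ^ 2) (by nlinarith) using 2
    ring
  have hodd := two_mul_le_log_one_add_sub_log_one_sub ht0 ht1
  rw [rpow_def_of_pos hsub, rpow_def_of_pos hadd, ← exp_add, exp_le_exp]
  nlinarith [mul_le_mul_of_nonneg_left hsq hm, mul_le_mul_of_nonneg_left hodd ha]

lemma two_rpow_le_of_two_mul_log_two_le {α r : ℝ} (hα : 0 ≤ α) (hr : 0 < r)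
    (ht : 2 * α / r + 2 / r ^ 2 < 1)
    (hE : 2 * log 2 ≤ 2 * α * (2 * α + 2 / r) -
      (2 * α + 2 / r) ^ 2 / (2 * (1 - (2 * α / r + 2 / r ^ 2) ^ 2))) :
    (2 : ℝ) ^ (-(r ^ 2 - 2)) ≤
      (1 / 2 - α / r - 1 / r ^ 2) ^ (r ^ 2 / 2 - α * r) *
        (1 / 2 + α / r + 1 / r ^ 2) ^ (r ^ 2 / 2 + α * r) := by
  set t := 2 * α / r + 2 / r ^ 2 with ht_def
  have ht0 : 0 ≤ t := by positivity
  have hrt : r * t = 2 * α + 2 / r := by rw [ht_def]; field_simp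
  rw [← hrt] at hE
  rw [show 1 / 2 - α / r - 1 / r ^ 2 = (1 - t) / 2 by ring,
    show 1 / 2 + α / r + 1 / r ^ 2 = (1 + t) / 2 by ring,
    div_rpow (by linarith) zero_le_two, div_rpow (by linarith) zero_le_two, div_mul_div_comm,
    ← rpow_add two_pos, show r ^ 2 / 2 - α * r + (r ^ 2 / 2 + α * r) = r ^ 2 by ring,
    le_div_iff₀ (by positivity), ← rpow_add two_pos, rpow_def_of_pos two_pos]
  calc exp (log 2 * (-(r ^ 2 - 2) + r ^ 2))
      ≤ exp (2 * (α * r) * t - r ^ 2 / 2 * (t ^ 2 / (1 - t ^ 2))) := by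
        have h1t : 1 - t ^ 2 ≠ 0 := by nlinarith
        rw [exp_le_exp]
        convert hE using 1
        · ring
        · field_simp
    _ ≤ _ := exp_le_one_sub_rpow_mul_one_add_rpow ht0 ht (by positivity) (by positivity)

lemma eventually_two_mul_log_two_lt {α : ℝ} (hα : log 2 < α ^ 2) :
    ∀ᶠ r in atTop, 2 * α / r + 2 / r ^ 2 < 1 ∧
      2 * log 2 < 2 * α * (2 * α + 2 / r) -
        (2 * α + 2 / r) ^ 2 / (2 * (1 - (2 * α / r + 2 / r ^ 2) ^ 2)) := by
  have hinv : Tendsto (fun r : ℝ => r⁻¹) atTop (𝓝 0) := tendsto_inv_atTop_zero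
  have hu : Tendsto (fun r : ℝ => 2 * α + 2 / r) atTop (𝓝 (2 * α)) := by
    simpa [div_eq_mul_inv] using (hinv.const_mul 2).const_add (2 * α)
  have ht : Tendsto (fun r : ℝ => 2 * α / r + 2 / r ^ 2) atTop (𝓝 0) := by
    simpa [div_eq_mul_inv] using (hinv.const_mul (2 * α)).add ((hinv.pow 2).const_mul 2)
  have hE : Tendsto (fun r : ℝ => 2 * α * (2 * α + 2 / r) -
      (2 * α + 2 / r) ^ 2 / (2 * (1 - (2 * α / r + 2 / r ^ 2) ^ 2))) atTop
      (𝓝 (2 * α * (2 * α) - (2 * α) ^ 2 / (2 * (1 - 0 ^ 2)))) :=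
    (hu.const_mul (2 * α)).sub
      ((hu.pow 2).div ((tendsto_const_nhds.sub (ht.pow 2)).const_mul 2) (by norm_num))
  refine (ht.eventually_lt_const one_pos).and (hE.eventually_const_lt ?_)
  nlinarith

lemma eventually_two_rpow_le {α : ℝ} (hα : √(log 2) < α) :
    ∀ᶠ r in atTop, (2 : ℝ) ^ (-(r ^ 2 - 2)) ≤
      (1 / 2 - α / r - 1 / r ^ 2) ^ (r ^ 2 / 2 - α * r) *
        (1 / 2 + α / r + 1 / r ^ 2) ^ (r ^ 2 / 2 + α * r) := by
  have hα0 : 0 < α := (sqrt_nonneg _).trans_lt hα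
  filter_upwards [eventually_two_mul_log_two_lt ((sqrt_lt' hα0).mp hα), eventually_gt_atTop 0]
    with r ⟨ht, hE⟩ hr
  exact two_rpow_le_of_two_mul_log_two_le hα0.le hr ht hE.le

/-- For `α > √(ln 2)`, eventually
`(1/2 - α/√n - 1/n)^(n/2 - α√n) · (1/2 + α/√n + 1/n)^(n/2 + α√n) ≥ 2^(-(n-2))`. -/
theorem interval_length_ge_two_pow (α : ℝ) (hα : Real.sqrt (Real.log 2) < α) :
    ∃ N : ℕ, ∀ n : ℕ, N ≤ n →
      (2 : ℝ) ^ (-((n : ℝ) - 2)) ≤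
        (1 / 2 - α / Real.sqrt n - 1 / n) ^ ((n : ℝ) / 2 - α * Real.sqrt n) *
          (1 / 2 + α / Real.sqrt n + 1 / n) ^ ((n : ℝ) / 2 + α * Real.sqrt n) := by
  obtain ⟨N, hN⟩ := eventually_atTop.mp
    ((tendsto_sqrt_atTop.comp tendsto_natCast_atTop_atTop).eventually (eventually_two_rpow_le hα))
  refine ⟨N, fun n hn => ?_⟩
  simpa only [Function.comp_apply, sq_sqrt n.cast_nonneg] using hN n hn
end

section
/- For every integer q ≥ 2 and every real α > 0, the sequence q^n · (1/q − 2α/(q√n) − 2/(qn))^(n/2 − α√n) · (1/q + 2α/(q√n) + 2/(qn))^(n/2 + α√n), where the powers are real-exponent powers and n ranges over natural numbers large enough that 1/q − 2α/(q√n) − 2/(qn) > 0, converges as n → ∞ to e^(2α²). -/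
/-!
Writing `x = 2α/√n + 2/n`, the bases are `(1 ∓ x)/q` and the exponents `n/2 ∓ α√n` add up to `n`,
so the factor `q^n` cancels and the quantity is `exp (a log (1 - x) + b log (1 + x))` with
`a, b = n/2 ∓ α√n`. To second order the exponent is `(b - a) x - (a + b) x²/2 = 2α² - 2/n`, and the
cubic remainder is `O(n |x|³) = O(1/√n)`.
-/

open Filter Real Topology

theorem abs_log_one_sub_add_le {x : ℝ} (hx : |x| ≤ 1 / 2) :
    |log (1 - x) + (x + x ^ 2 / 2)| ≤ 2 * |x| ^ 3 := by
  have h := abs_log_sub_add_sum_range_le (hx.trans_lt (by norm_num)) 2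
  norm_num [Finset.sum_range_succ] at h
  calc |log (1 - x) + (x + x ^ 2 / 2)| = |x + x ^ 2 / 2 + log (1 - x)| := by ring_nf
    _ ≤ |x| ^ 3 / (1 - |x|) := h
    _ ≤ 2 * |x| ^ 3 := by
      rw [div_le_iff₀ (by linarith)]
      nlinarith [pow_nonneg (abs_nonneg x) 3]

theorem abs_mul_log_one_sub_add_mul_log_one_add_sub_le {a b x : ℝ} (ha : 0 ≤ a) (hb : 0 ≤ b)
    (hx : |x| ≤ 1 / 2) :
    |a * log (1 - x) + b * log (1 + x) - ((b - a) * x - (a + b) * x ^ 2 / 2)| ≤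
      2 * (a + b) * |x| ^ 3 := by
  have h₁ := abs_log_one_sub_add_le hx
  have h₂ := abs_log_one_sub_add_le (x := -x) (by rwa [abs_neg])
  rw [sub_neg_eq_add, abs_neg, neg_sq] at h₂
  calc _ = |a * (log (1 - x) + (x + x ^ 2 / 2)) + b * (log (1 + x) + (-x + x ^ 2 / 2))| := by
          ring_nf
    _ ≤ a * (2 * |x| ^ 3) + b * (2 * |x| ^ 3) := by
      refine (abs_add_le _ _).trans ?_
      rw [abs_mul, abs_mul, abs_of_nonneg ha, abs_of_nonneg hb]
      gcongr
    _ = 2 * (a + b) * |x| ^ 3 := by ring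

theorem tendsto_one_sub_rpow_mul_one_add_rpow {ι : Type*} {l : Filter ι} {a b x : ι → ℝ} {L : ℝ}
    (ha : ∀ᶠ i in l, 0 ≤ a i) (hb : ∀ᶠ i in l, 0 ≤ b i) (hx : Tendsto x l (𝓝 0))
    (hcube : Tendsto (fun i => (a i + b i) * |x i| ^ 3) l (𝓝 0))
    (hmain : Tendsto (fun i => (b i - a i) * x i - (a i + b i) * x i ^ 2 / 2) l (𝓝 L)) :
    Tendsto (fun i => (1 - x i) ^ a i * (1 + x i) ^ b i) l (𝓝 (exp L)) := by
  have hsmall : ∀ᶠ i in l, |x i| ≤ 1 / 2 := by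
    simpa using hx.abs.eventually (eventually_le_nhds (by norm_num : |(0:ℝ)| < 1 / 2))
  have hlog : Tendsto (fun i => a i * log (1 - x i) + b i * log (1 + x i)) l (𝓝 L) := by
    have herr : Tendsto (fun i => a i * log (1 - x i) + b i * log (1 + x i) -
        ((b i - a i) * x i - (a i + b i) * x i ^ 2 / 2)) l (𝓝 0) := by
      refine squeeze_zero_norm' ?_ (by simpa [mul_assoc] using hcube.const_mul 2)
      filter_upwards [ha, hb, hsmall] with i hai hbi hxi
      simpa only [norm_eq_abs, mul_assoc] using
        abs_mul_log_one_sub_add_mul_log_one_add_sub_le hai hbi hxi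
    simpa using herr.add hmain
  refine ((continuous_exp.tendsto L).comp hlog).congr' ?_
  filter_upwards [hsmall] with i hi
  have h₁ : 0 < 1 - x i := by linarith [le_abs_self (x i)]
  have h₂ : 0 < 1 + x i := by linarith [neg_abs_le (x i)]
  simp only [Function.comp, rpow_def_of_pos h₁, rpow_def_of_pos h₂, ← exp_add]
  ring_nf

theorem rpow_mul_div_rpow_mul_div_rpow {q u v a b c : ℝ} (hq : 0 < q) (hu : 0 ≤ u) (hv : 0 ≤ v)
    (h : a + b = c) : q ^ c * (u / q) ^ a * (v / q) ^ b = u ^ a * v ^ b := by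
  rw [← h, rpow_add hq, div_rpow hu hq.le, div_rpow hv hq.le]
  field_simp

theorem tendsto_sqrt_natCast_atTop : Tendsto (fun n : ℕ => √(n : ℝ)) atTop atTop :=
  tendsto_sqrt_atTop.comp tendsto_natCast_atTop_atTop

theorem eventually_nonneg_natCast_div_two_sub_mul_sqrt (α : ℝ) :
    ∀ᶠ n : ℕ in atTop, 0 ≤ (n : ℝ) / 2 - α * √n := by
  filter_upwards [tendsto_sqrt_natCast_atTop.eventually_ge_atTop (2 * α)] with n hn
  have hsq : √(n : ℝ) ^ 2 = n := sq_sqrt n.cast_nonneg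
  nlinarith [mul_nonneg (sqrt_nonneg (n : ℝ)) (sub_nonneg.2 hn)]

noncomputable def deviation (α : ℝ) (n : ℕ) : ℝ := 2 * α / √n + 2 / n

theorem tendsto_deviation_s5 (α : ℝ) : Tendsto (deviation α) atTop (𝓝 0) := by
  show Tendsto (fun n : ℕ => 2 * α / √n + 2 / n) atTop (𝓝 0)
  simpa using (tendsto_const_nhds.div_atTop tendsto_sqrt_natCast_atTop).add
    (tendsto_const_nhds.div_atTop (tendsto_natCast_atTop_atTop (R := ℝ)))

theorem natCast_mul_abs_deviation_pow_three {n : ℕ} (hn : n ≠ 0) (α : ℝ) :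
    n * |deviation α n| ^ 3 = |2 * α + 2 / √n| ^ 3 / √n := by
  have hs : 0 < √(n : ℝ) := sqrt_pos.2 (by positivity)
  have hsq : (n : ℝ) = √n ^ 2 := (sq_sqrt n.cast_nonneg).symm
  rw [deviation]
  set s := √(n : ℝ)
  rw [hsq, show 2 * α / s + 2 / s ^ 2 = (2 * α + 2 / s) / s by field_simp, abs_div, abs_of_pos hs]
  field_simp

theorem tendsto_natCast_mul_abs_deviation_pow_three (α : ℝ) :
    Tendsto (fun n : ℕ => n * |deviation α n| ^ 3) atTop (𝓝 0) := by
  have hnum : Tendsto (fun n : ℕ => |2 * α + 2 / √n| ^ 3) atTop (𝓝 (|2 * α + 0| ^ 3)) :=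
    ((tendsto_const_nhds.add (tendsto_const_nhds.div_atTop tendsto_sqrt_natCast_atTop)).abs).pow 3
  refine (hnum.div_atTop tendsto_sqrt_natCast_atTop).congr' ?_
  filter_upwards [eventually_ne_atTop 0] with n hn
  exact (natCast_mul_abs_deviation_pow_three hn α).symm

theorem two_mul_mul_sqrt_mul_deviation_sub {n : ℕ} (hn : n ≠ 0) (α : ℝ) :
    2 * α * √n * deviation α n - n * deviation α n ^ 2 / 2 = 2 * α ^ 2 - 2 / n := by
  have hs : 0 < √(n : ℝ) := sqrt_pos.2 (by positivity)
  have hsq : (n : ℝ) = √n ^ 2 := (sq_sqrt n.cast_nonneg).symm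
  rw [deviation]
  set s := √(n : ℝ)
  rw [hsq]
  field_simp
  ring

theorem tendsto_two_mul_mul_sqrt_mul_deviation_sub (α : ℝ) :
    Tendsto (fun n : ℕ => 2 * α * √n * deviation α n - n * deviation α n ^ 2 / 2) atTop
      (𝓝 (2 * α ^ 2)) := by
  have h : Tendsto (fun n : ℕ => 2 * α ^ 2 - 2 / (n : ℝ)) atTop (𝓝 (2 * α ^ 2 - 0)) :=
    tendsto_const_nhds.sub (tendsto_const_nhds.div_atTop tendsto_natCast_atTop_atTop)
  rw [sub_zero] at h
  refine h.congr' ?_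
  filter_upwards [eventually_ne_atTop 0] with n hn
  exact (two_mul_mul_sqrt_mul_deviation_sub hn α).symm

theorem tendsto_qary_interval_length_ratio_general (q : ℕ) (hq : 2 ≤ q) (α : ℝ) :
    Filter.Tendsto (fun n : ℕ =>
      (q : ℝ) ^ (n : ℝ) *
        (1 / q - 2 * α / (q * Real.sqrt n) - 2 / (q * n)) ^ ((n : ℝ) / 2 - α * Real.sqrt n) *
        (1 / q + 2 * α / (q * Real.sqrt n) + 2 / (q * n)) ^ ((n : ℝ) / 2 + α * Real.sqrt n))
      Filter.atTop (nhds (Real.exp (2 * α ^ 2))) := by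
  have hq₀ : (0 : ℝ) < q := by exact_mod_cast (by omega : 0 < q)
  have hdev := tendsto_deviation_s5 α
  have hlim := tendsto_one_sub_rpow_mul_one_add_rpow (x := deviation α)
    (a := fun n : ℕ => (n : ℝ) / 2 - α * √n) (b := fun n : ℕ => (n : ℝ) / 2 + α * √n)
    (eventually_nonneg_natCast_div_two_sub_mul_sqrt α)
    (by simpa using eventually_nonneg_natCast_div_two_sub_mul_sqrt (-α)) hdev
    ((tendsto_natCast_mul_abs_deviation_pow_three α).congr fun n => by ring)
    ((tendsto_two_mul_mul_sqrt_mul_deviation_sub α).congr fun n => by ring)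
  refine hlim.congr' ?_
  filter_upwards [hdev.eventually (Icc_mem_nhds (by norm_num : (-1 : ℝ) < 0) one_pos)]
    with n ⟨hlow, hupp⟩
  have hminus : 1 / q - 2 * α / (q * √n) - 2 / (q * n) = (1 - deviation α n) / q := by
    rw [deviation]; ring
  have hplus : 1 / q + 2 * α / (q * √n) + 2 / (q * n) = (1 + deviation α n) / q := by
    rw [deviation]; ring
  rw [hminus, hplus, rpow_mul_div_rpow_mul_div_rpow hq₀ (by linarith) (by linarith) (by ring)]

/-- For every integer `q ≥ 2` and every `α > 0`,
`q^n · (1/q - 2α/(q√n) - 2/(qn))^(n/2 - α√n) · (1/q + 2α/(q√n) + 2/(qn))^(n/2 + α√n)`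
(real-exponent powers) converges to `e^(2α²)` as `n → ∞`. -/
theorem tendsto_qary_interval_length_ratio (q : ℕ) (hq : 2 ≤ q) (α : ℝ) (hα : 0 < α) :
    Filter.Tendsto (fun n : ℕ =>
      (q : ℝ) ^ (n : ℝ) *
        (1 / q - 2 * α / (q * Real.sqrt n) - 2 / (q * n)) ^ ((n : ℝ) / 2 - α * Real.sqrt n) *
        (1 / q + 2 * α / (q * Real.sqrt n) + 2 / (q * n)) ^ ((n : ℝ) / 2 + α * Real.sqrt n))
      Filter.atTop (nhds (Real.exp (2 * α ^ 2))) :=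
  tendsto_qary_interval_length_ratio_general q hq α
end

section
/- For every integer q ≥ 2 and every real α with α > √(ln q), there exists a natural number N such that for all n ≥ N, (1/q − 2α/(q√n) − 2/(qn))^(n/2 − α√n) · (1/q + 2α/(q√n) + 2/(qn))^(n/2 + α√n) ≥ q^(−(n−2)). -/
/-!
Write the two bases as `(1 ∓ ε) / q` with `ε = 2α/√n + 2/n`. Taking logarithms, the claim becomes
`(n/2 - α√n) log (1 - ε) + (n/2 + α√n) log (1 + ε) ≥ 2 log q`. The left side equals
`(n/2) log (1 - ε²) + α√n (log (1 + ε) - log (1 - ε))`, and the bounds `log (1 - ε²) ≥ -ε²/(1 - ε²)`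
and `log (1 + ε) - log (1 - ε) ≥ 2ε` make it at least a quantity tending to `4α² - 2α² = 2α²`,
which exceeds `2 log q` because `α² > log q`.
-/

open Real Filter Topology

namespace Real

lemma two_mul_le_log_one_add_sub_log_one_sub {x : ℝ} (hx₀ : 0 ≤ x) (hx₁ : x < 1) :
    2 * x ≤ log (1 + x) - log (1 - x) := by
  have hsum := hasSum_log_sub_log_of_abs_lt_one (abs_lt.2 ⟨by linarith, hx₁⟩)
  simpa using le_hasSum hsum 0 fun k _ => by positivity

lemma le_sub_mul_log_one_sub_add_add_mul_log_one_add {m d ε : ℝ} (hm : 0 ≤ m) (hd : 0 ≤ d)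
    (hε₀ : 0 ≤ ε) (hε₁ : ε < 1) :
    2 * d * ε - m * (ε ^ 2 / (1 - ε ^ 2)) ≤ (m - d) * log (1 - ε) + (m + d) * log (1 + ε) := by
  have hsq : 0 < 1 - ε ^ 2 := by nlinarith
  have hsplit : log (1 - ε ^ 2) = log (1 - ε) + log (1 + ε) := by
    rw [← log_mul (by linarith) (by linarith)]; ring_nf
  have hsq_log : -(ε ^ 2 / (1 - ε ^ 2)) ≤ log (1 - ε ^ 2) := by
    convert one_sub_inv_le_log_of_pos hsq using 1
    field_simp
    ring
  have hodd := two_mul_le_log_one_add_sub_log_one_sub hε₀ hε₁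
  nlinarith [mul_le_mul_of_nonneg_left hsq_log hm, mul_le_mul_of_nonneg_left hodd hd]

lemma rpow_neg_sub_two_le_div_rpow_mul_div_rpow {q x y a b t : ℝ} (hq : 0 < q) (hx : 0 < x)
    (hy : 0 < y) (hab : a + b = t) (h : 2 * log q ≤ a * log x + b * log y) :
    q ^ (-(t - 2)) ≤ (x / q) ^ a * (y / q) ^ b := by
  rw [← log_le_log_iff (by positivity) (by positivity), log_mul (by positivity) (by positivity),
    log_rpow hq, log_rpow (by positivity), log_rpow (by positivity), log_div hx.ne' hq.ne',
    log_div hy.ne' hq.ne', ← hab]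
  linarith

end Real

noncomputable def relDeviation (α : ℝ) (n : ℕ) : ℝ := 2 * α / √n + 2 / n

lemma tendsto_inv_sqrt_natCast_atTop : Tendsto (fun n : ℕ => (√n)⁻¹) atTop (𝓝 0) :=
  (tendsto_inv_atTop_zero.comp tendsto_sqrt_atTop).comp tendsto_natCast_atTop_atTop

lemma tendsto_relDeviation (α : ℝ) : Tendsto (relDeviation α) atTop (𝓝 0) := by
  have h := (tendsto_inv_sqrt_natCast_atTop.const_mul (2 * α)).add
    ((tendsto_inv_atTop_nhds_zero_nat (𝕜 := ℝ)).const_mul 2)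
  simp only [mul_zero, add_zero] at h
  exact h.congr fun n => by simp [relDeviation, div_eq_mul_inv]

lemma tendsto_sqrt_mul_relDeviation (α : ℝ) :
    Tendsto (fun n : ℕ => √n * relDeviation α n) atTop (𝓝 (2 * α)) := by
  have h : Tendsto (fun n : ℕ => 2 * α + 2 * (√n)⁻¹) atTop (𝓝 (2 * α)) := by
    simpa using (tendsto_inv_sqrt_natCast_atTop.const_mul 2).const_add (2 * α)
  refine h.congr' ((eventually_ge_atTop 1).mono fun n hn => ?_)
  have hs : 0 < √(n : ℝ) := sqrt_pos.2 (by exact_mod_cast hn)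
  simp only [relDeviation]
  field_simp
  linear_combination -sq_sqrt n.cast_nonneg

lemma tendsto_relDeviation_lowerBound (α : ℝ) :
    Tendsto (fun n : ℕ => 2 * (α * √n) * relDeviation α n -
      n / 2 * (relDeviation α n ^ 2 / (1 - relDeviation α n ^ 2))) atTop (𝓝 (2 * α ^ 2)) := by
  have hw := tendsto_sqrt_mul_relDeviation α
  have hε := tendsto_relDeviation α
  have hden : (1 : ℝ) - 0 ^ 2 ≠ 0 := by norm_num
  have h := (hw.const_mul (2 * α)).sub
    (((hw.pow 2).div_const 2).div (tendsto_const_nhds.sub (hε.pow 2)) hden)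
  convert h using 2 with n
  · simp only [Pi.div_apply, mul_pow, sq_sqrt n.cast_nonneg]
    ring
  · ring

/-- For every integer `q ≥ 2` and `α > √(ln q)`, eventually
`(1/q - 2α/(q√n) - 2/(qn))^(n/2 - α√n) · (1/q + 2α/(q√n) + 2/(qn))^(n/2 + α√n) ≥ q^(-(n-2))`. -/
theorem qary_interval_length_ge (q : ℕ) (hq : 2 ≤ q) (α : ℝ)
    (hα : Real.sqrt (Real.log q) < α) :
    ∃ N : ℕ, ∀ n : ℕ, N ≤ n →
      (q : ℝ) ^ (-((n : ℝ) - 2)) ≤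
        (1 / q - 2 * α / (q * Real.sqrt n) - 2 / (q * n)) ^ ((n : ℝ) / 2 - α * Real.sqrt n) *
          (1 / q + 2 * α / (q * Real.sqrt n) + 2 / (q * n)) ^ ((n : ℝ) / 2 + α * Real.sqrt n) := by
  have hq₀ : (0 : ℝ) < q := Nat.cast_pos.2 (by omega)
  have hα₀ : 0 < α := (sqrt_nonneg _).trans_lt hα
  have hlog : 2 * log q < 2 * α ^ 2 := by linarith [(sqrt_lt' hα₀).1 hα]
  obtain ⟨N, hN⟩ := eventually_atTop.1 <|
    ((tendsto_relDeviation_lowerBound α).eventually (lt_mem_nhds hlog)).and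
      ((tendsto_relDeviation α).eventually (gt_mem_nhds one_pos))
  refine ⟨N, fun n hn => ?_⟩
  obtain ⟨hbound, hε₁⟩ := hN n hn
  have hε₀ : 0 ≤ relDeviation α n := by unfold relDeviation; positivity
  rw [show 1 / q - 2 * α / (q * √n) - 2 / (q * n) = (1 - relDeviation α n) / q by
      unfold relDeviation; ring,
    show 1 / q + 2 * α / (q * √n) + 2 / (q * n) = (1 + relDeviation α n) / q by
      unfold relDeviation; ring]
  refine rpow_neg_sub_two_le_div_rpow_mul_div_rpow hq₀ (by linarith) (by linarith) (by ring) ?_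
  exact hbound.le.trans <|
    le_sub_mul_log_one_sub_add_add_mul_log_one_add (by positivity) (by positivity) hε₀ hε₁
end

section
/- For every even integer q = 2r with r ≥ 1, there exists a natural number N such that for all n ≥ N, the number of sequences x ∈ {0,1,…,q−1}^n with #{j : x_j < r} ∈ [n/2 − 0.34·√n, n/2 + 0.34·√n] is at least q^(n−1). -/
/-!
Every set `S` of positions is the set of lower-half positions of exactly `r ^ n` words, so the
count is `r ^ n` times the binomial mass `∑ C(n, k)` of the window `|k - n/2| ≤ 0.34 √n`, and it
suffices that this mass is at least `2 ^ (n - 1)`. Reflecting `k ↦ n - k`, the mass is at least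
`2 ∑_{1 ≤ j ≤ J} C(n, ⌊n/2⌋ + j)` with `J = ⌊0.34 √n⌋`, and the ratio bound
`C(n, ⌊n/2⌋ + j) ≥ C(n, ⌊n/2⌋) (1 - 2j²/n)` turns this into `C(n, ⌊n/2⌋) (J - 2(J+1)³/(3n))`.
Stirling's formula gives `C(n, ⌊n/2⌋) ~ 2^n √(2/(πn))`, so the mass is eventually about
`2^(n+1) √(2/π) (c - 2c³/3)` with `c = 0.34`, and `√(2/π) (c - 2c³/3) ≈ 0.2504 > 1/4`.
-/

open Filter Real Finset
open scoped Topology Nat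

def lowerPositions {n : ℕ} (r : ℕ) (x : Fin n → Fin (2 * r)) : Finset (Fin n) :=
  univ.filter fun j => (x j : ℕ) < r

noncomputable def centralWindow (n : ℕ) (t : ℝ) : Finset ℕ :=
  (range (n + 1)).filter fun k => (n : ℝ) / 2 - t ≤ k ∧ (k : ℝ) ≤ n / 2 + t

lemma card_filter_lowerPositions_eq (n r : ℕ) (S : Finset (Fin n)) :
    #{x : Fin n → Fin (2 * r) | lowerPositions r x = S} = r ^ n := by
  have hfiber : ({x : Fin n → Fin (2 * r) | lowerPositions r x = S} : Finset _) =
      Fintype.piFinset fun j => if j ∈ S then univ.filter (fun i : Fin (2 * r) => (i : ℕ) < r)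
        else univ.filter (fun i : Fin (2 * r) => ¬ (i : ℕ) < r) := by
    ext x
    simp only [lowerPositions, mem_filter, mem_univ, true_and, Fintype.mem_piFinset, Finset.ext_iff]
    refine forall_congr' fun j => ?_
    split_ifs with hj <;> simp [hj]
  have hlow : #{i : Fin (2 * r) | (i : ℕ) < r} = r := by
    rw [Fin.card_filter_val_lt]; omega
  have hhigh : #{i : Fin (2 * r) | ¬ (i : ℕ) < r} = r := by
    rw [filter_not, card_sdiff_of_subset (filter_subset _ _), hlow, card_univ, Fintype.card_fin]
    omega
  rw [hfiber, Fintype.card_piFinset]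
  simp only [apply_ite card, hlow, hhigh, ite_self, prod_const, card_univ, Fintype.card_fin]

lemma card_finset_filter_card_eq_sum_choose (n : ℕ) (P : ℕ → Prop) [DecidablePred P] :
    #{S : Finset (Fin n) | P #S} = ∑ k ∈ range (n + 1) with P k, n.choose k := by
  have h := sum_powerset_apply_card (fun k => if P k then 1 else 0) (x := (univ : Finset (Fin n)))
  simp only [powerset_univ, ← sum_filter, smul_eq_mul, mul_ite, mul_one, mul_zero] at h
  rw [card_eq_sum_ones, h, card_univ, Fintype.card_fin]

lemma card_subtype_card_lowerPositions (n r : ℕ) (P : ℕ → Prop) [DecidablePred P] :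
    Nat.card {x : Fin n → Fin (2 * r) // P (lowerPositions r x).card} =
      r ^ n * ∑ k ∈ range (n + 1) with P k, n.choose k := by
  rw [Nat.card_eq_fintype_card, Fintype.card_subtype,
    card_eq_sum_card_fiberwise (f := lowerPositions r)
      (t := {S | P #S}) (by intro x hx; simpa using hx)]
  rw [sum_congr rfl fun S hS => ?_, sum_const, smul_eq_mul, card_finset_filter_card_eq_sum_choose,
    mul_comm]
  rw [filter_filter, ← card_filter_lowerPositions_eq n r S]
  congr 1
  refine filter_congr fun x _ => and_iff_right_of_imp fun hx => ?_
  rw [hx]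
  exact (mem_filter.1 hS).2

lemma mul_one_sub_sum_le_of_mul_one_sub_le {a d : ℕ → ℝ} (ha : ∀ j, 0 ≤ a j) (hd : ∀ j, 0 ≤ d j)
    (h : ∀ j, a j * (1 - d j) ≤ a (j + 1)) (j : ℕ) :
    a 0 * (1 - ∑ i ∈ range j, d i) ≤ a j := by
  induction j with
  | zero => simp
  | succ j ih =>
    have hS : 0 ≤ ∑ i ∈ range j, d i := sum_nonneg fun i _ => hd i
    rw [sum_range_succ]
    rcases le_total (1 - ∑ i ∈ range j, d i) 0 with hneg | hpos
    · nlinarith [ha 0, ha (j + 1), hd j]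
    rcases le_total (1 - d j) 0 with hneg' | hpos'
    · nlinarith [ha 0, ha (j + 1), hd j]
    calc a 0 * (1 - (∑ i ∈ range j, d i + d j))
        ≤ a 0 * (1 - ∑ i ∈ range j, d i) * (1 - d j) := by
          nlinarith [mul_nonneg (mul_nonneg (ha 0) hS) (hd j)]
      _ ≤ a j * (1 - d j) := mul_le_mul_of_nonneg_right ih hpos'
      _ ≤ a (j + 1) := h j

lemma Nat.choose_mul_one_sub_le_choose_succ {n k : ℕ} (hk : 2 * k ≤ n) (j : ℕ) :
    (n.choose (k + j) : ℝ) * (1 - (2 * j + 1) / (k + 1)) ≤ n.choose (k + j + 1) := by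
  rcases lt_or_ge n (k + j) with hlt | hle
  · simp [Nat.choose_eq_zero_of_lt hlt]
  have hrec : (n.choose (k + j + 1) : ℝ) * (k + j + 1) = n.choose (k + j) * (n - (k + j)) := by
    rw [← Nat.cast_add, ← Nat.cast_sub hle]
    exact_mod_cast Nat.choose_succ_right_eq n (k + j)
  have hkR : 2 * (k : ℝ) ≤ n := by exact_mod_cast hk
  have hfactor : (1 - (2 * j + 1) / (k + 1) : ℝ) * (k + j + 1) ≤ n - (k + j) := by
    rw [one_sub_div (by positivity), div_mul_eq_mul_div, div_le_iff₀ (by positivity)]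
    nlinarith
  refine le_of_mul_le_mul_right ?_ (by positivity : (0 : ℝ) < k + j + 1)
  rw [hrec, mul_assoc]
  exact mul_le_mul_of_nonneg_left hfactor (Nat.cast_nonneg _)

lemma Nat.choose_mul_one_sub_sq_div_le_choose_add {n k : ℕ} (hk : 2 * k ≤ n) (j : ℕ) :
    (n.choose k : ℝ) * (1 - j ^ 2 / (k + 1)) ≤ n.choose (k + j) := by
  have hsum : ∑ i ∈ range j, (2 * (i : ℝ) + 1) / (k + 1) = j ^ 2 / (k + 1) := by
    rw [← sum_div]
    congr 1
    induction j with
    | zero => simp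
    | succ j ih => rw [sum_range_succ, ih]; push_cast; ring
  simpa [hsum] using mul_one_sub_sum_le_of_mul_one_sub_le (a := fun j => (n.choose (k + j) : ℝ))
    (fun _ => Nat.cast_nonneg _) (fun _ => by positivity) (Nat.choose_mul_one_sub_le_choose_succ hk) j

lemma sum_Icc_sq_le (J : ℕ) : ∑ j ∈ Icc 1 J, (j : ℝ) ^ 2 ≤ (J + 1) ^ 3 / 3 := by
  induction J with
  | zero => simp
  | succ J ih =>
    rw [sum_Icc_succ_top (by omega)]
    push_cast
    nlinarith [(J.cast_nonneg : (0 : ℝ) ≤ J)]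

lemma choose_half_mul_le_sum_choose_half_add {n : ℕ} (hn : 0 < n) (J : ℕ) :
    (n.choose (n / 2) : ℝ) * (J - 2 * (J + 1) ^ 3 / (3 * n)) ≤
      ∑ j ∈ Icc 1 J, (n.choose (n / 2 + j) : ℝ) := by
  have hnR : (0 : ℝ) < n := by exact_mod_cast hn
  have hhalf : (n : ℝ) ≤ 2 * ((n / 2 : ℕ) + 1) := by
    have : n ≤ 2 * (n / 2 + 1) := by omega
    exact_mod_cast this
  have hsum : (J : ℝ) - 2 * (J + 1) ^ 3 / (3 * n) ≤ ∑ j ∈ Icc 1 J, (1 - 2 * (j : ℝ) ^ 2 / n) := by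
    rw [sum_sub_distrib, sum_const, Nat.card_Icc, ← sum_div, ← mul_sum, nsmul_eq_mul, mul_one,
      Nat.add_sub_cancel]
    rw [show 2 * ((J : ℝ) + 1) ^ 3 / (3 * n) = 2 * ((J + 1) ^ 3 / 3) / n by ring]
    gcongr
    exact sum_Icc_sq_le J
  calc (n.choose (n / 2) : ℝ) * (J - 2 * (J + 1) ^ 3 / (3 * n))
      ≤ ∑ j ∈ Icc 1 J, (n.choose (n / 2) : ℝ) * (1 - 2 * (j : ℝ) ^ 2 / n) := by
        rw [← mul_sum]; gcongr
    _ ≤ ∑ j ∈ Icc 1 J, (n.choose (n / 2 + j) : ℝ) := by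
        refine sum_le_sum fun j _ => le_trans ?_
          (Nat.choose_mul_one_sub_sq_div_le_choose_add (by omega) j)
        gcongr _ * (1 - ?_)
        rw [div_le_div_iff₀ (by positivity) hnR]
        nlinarith [sq_nonneg (j : ℝ)]

lemma two_mul_sum_choose_half_add_le_sum_choose_centralWindow {n J : ℕ} {t : ℝ}
    (hJn : 2 * J ≤ n) (hJt : (J : ℝ) ≤ t) :
    2 * ∑ j ∈ Icc 1 J, n.choose (n / 2 + j) ≤ ∑ k ∈ centralWindow n t, n.choose k := by
  set m := n / 2
  have hm : 2 * (m : ℝ) ≤ n ∧ (n : ℝ) ≤ 2 * m + 1 := by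
    constructor <;> norm_cast <;> omega
  have hup : ∀ j ∈ Icc 1 J, m + j ∈ centralWindow n t := fun j hj => by
    rw [mem_Icc] at hj
    have hjJ : (1 : ℝ) ≤ j ∧ (j : ℝ) ≤ J := ⟨by exact_mod_cast hj.1, by exact_mod_cast hj.2⟩
    rw [centralWindow, mem_filter, mem_range]
    refine ⟨by omega, ?_, ?_⟩ <;> push_cast <;> linarith
  have hlow : ∀ j ∈ Icc 1 J, n - (m + j) ∈ centralWindow n t := fun j hj => by
    rw [mem_Icc] at hj
    have hjJ : (1 : ℝ) ≤ j ∧ (j : ℝ) ≤ J := ⟨by exact_mod_cast hj.1, by exact_mod_cast hj.2⟩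
    rw [centralWindow, mem_filter, mem_range, Nat.cast_sub (by omega)]
    refine ⟨by omega, ?_, ?_⟩ <;> push_cast <;> linarith
  have hup_inj : Set.InjOn (m + ·) (Icc 1 J : Set ℕ) := fun a _ b _ h => by simpa using h
  have hlow_inj : Set.InjOn (fun j => n - (m + j)) (Icc 1 J : Set ℕ) := fun a ha b hb h => by
    simp only [coe_Icc, Set.mem_Icc] at ha hb
    simp only at h
    omega
  have hdisj : Disjoint ((Icc 1 J).image (m + ·)) ((Icc 1 J).image fun j => n - (m + j)) := by
    simp only [disjoint_left, mem_image, mem_Icc, not_exists, not_and]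
    rintro _ ⟨a, ha, rfl⟩ b hb h
    omega
  calc 2 * ∑ j ∈ Icc 1 J, n.choose (m + j)
      = ∑ j ∈ Icc 1 J, n.choose (m + j) + ∑ j ∈ Icc 1 J, n.choose (n - (m + j)) := by
        rw [two_mul]
        congr 1
        exact sum_congr rfl fun j hj => (Nat.choose_symm (by simp at hj; omega)).symm
    _ = ∑ k ∈ (Icc 1 J).image (m + ·) ∪ (Icc 1 J).image (fun j => n - (m + j)), n.choose k := by
        rw [sum_union hdisj, sum_image hup_inj, sum_image hlow_inj]
    _ ≤ ∑ k ∈ centralWindow n t, n.choose k :=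
        sum_le_sum_of_subset (union_subset (image_subset_iff.2 hup) (image_subset_iff.2 hlow))

lemma centralBinom_mul_sqrt_div_four_pow_eq_stirlingSeq {k : ℕ} (hk : k ≠ 0) :
    (k.centralBinom : ℝ) * √k / 4 ^ k = Stirling.stirlingSeq (2 * k) / Stirling.stirlingSeq k ^ 2 := by
  have hfac : (k.centralBinom : ℝ) * k ! * k ! = (2 * k)! := by
    have h := Nat.choose_mul_factorial_mul_factorial (by omega : k ≤ 2 * k)
    rw [show 2 * k - k = k by omega, ← Nat.centralBinom_eq_two_mul_choose] at h
    exact_mod_cast h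
  have hk' : (0 : ℝ) < k := by positivity
  have hsqrt : √(2 * (2 * (k : ℝ))) = 2 * √k := by
    rw [show 2 * (2 * (k : ℝ)) = 2 ^ 2 * k by ring, sqrt_mul (by positivity), sqrt_sq (by norm_num)]
  have hpow : (2 * (k : ℝ) / rexp 1) ^ (2 * k) = 4 ^ k * ((k / rexp 1) ^ k) ^ 2 := by
    rw [mul_div_assoc, mul_pow, pow_mul, ← pow_mul _ k 2, mul_comm k 2, pow_mul]; norm_num
  simp only [Stirling.stirlingSeq, ← hfac]
  push_cast
  rw [hsqrt, hpow, div_pow (k ! : ℝ), mul_pow, sq_sqrt (by positivity)]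
  field_simp
  rw [sq_sqrt hk'.le]

lemma tendsto_centralBinom_mul_sqrt_div_four_pow :
    Tendsto (fun k : ℕ => (k.centralBinom : ℝ) * √k / 4 ^ k) atTop (𝓝 (1 / √π)) := by
  have h := (Stirling.tendsto_stirlingSeq_sqrt_pi.comp (tendsto_id.const_mul_atTop' two_pos)).div
    (Stirling.tendsto_stirlingSeq_sqrt_pi.pow 2) (by positivity)
  rw [sq, ← div_div, div_self (by positivity)] at h
  refine h.congr' ?_
  filter_upwards [eventually_ne_atTop 0] with k hk
  exact (centralBinom_mul_sqrt_div_four_pow_eq_stirlingSeq hk).symm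

lemma Filter.Tendsto.of_comp_two_mul_of_comp_two_mul_add_one {α : Type*} {l : Filter α}
    {f : ℕ → α} (h₀ : Tendsto (fun k => f (2 * k)) atTop l)
    (h₁ : Tendsto (fun k => f (2 * k + 1)) atTop l) : Tendsto f atTop l := by
  refine tendsto_def.2 fun s hs => mem_atTop_sets.2 ?_
  obtain ⟨a, ha⟩ := mem_atTop_sets.1 (tendsto_def.1 h₀ s hs)
  obtain ⟨b, hb⟩ := mem_atTop_sets.1 (tendsto_def.1 h₁ s hs)
  refine ⟨2 * a + 2 * b, fun n hn => ?_⟩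
  obtain ⟨k, rfl | rfl⟩ := Nat.even_or_odd' n
  · exact ha k (by omega)
  · exact hb k (by omega)

lemma Nat.centralBinom_succ_eq_two_mul_choose (k : ℕ) :
    (k + 1).centralBinom = 2 * (2 * k + 1).choose k := by
  rw [Nat.centralBinom_eq_two_mul_choose, show 2 * (k + 1) = 2 * k + 1 + 1 by ring,
    Nat.choose_succ_succ, Nat.choose_symm_half]
  ring

lemma tendsto_sqrt_mul_choose_half_div_two_pow :
    Tendsto (fun n : ℕ => √n * n.choose (n / 2) / 2 ^ n) atTop (𝓝 (√2 / √π)) := by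
  have hcb := tendsto_centralBinom_mul_sqrt_div_four_pow
  refine Tendsto.of_comp_two_mul_of_comp_two_mul_add_one ?_ ?_
  · convert hcb.const_mul √2 using 1
    · ext k
      rw [Nat.mul_div_cancel_left k two_pos, ← Nat.centralBinom_eq_two_mul_choose, pow_mul]
      push_cast
      rw [sqrt_mul zero_le_two]
      norm_num
      ring
    · rw [mul_one_div]
  · have hratio : Tendsto (fun k : ℕ => √((2 * k + 1) / (k + 1))) atTop (𝓝 √2) := by
      refine (continuous_sqrt.tendsto 2).comp ?_
      have := (tendsto_one_div_add_atTop_nhds_zero_nat).const_sub (2 : ℝ)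
      rw [sub_zero] at this
      refine this.congr fun k => ?_
      field_simp
      ring
    convert hratio.mul (hcb.comp (tendsto_add_atTop_nat 1)) using 1
    · ext k
      simp only [Function.comp_apply]
      rw [show (2 * k + 1) / 2 = k by omega, Nat.centralBinom_succ_eq_two_mul_choose,
        sqrt_div (by positivity), pow_succ, pow_mul]
      push_cast
      field_simp
      norm_num
      ring
    · rw [mul_one_div]

lemma tendsto_natFloor_mul_sqrt_add_div_sqrt {c : ℝ} (hc : 0 ≤ c) (d : ℝ) :
    Tendsto (fun n : ℕ => (⌊c * √n⌋₊ + d) / √n) atTop (𝓝 c) := by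
  have hsqrt : Tendsto (fun n : ℕ => √n) atTop atTop :=
    tendsto_sqrt_atTop.comp tendsto_natCast_atTop_atTop
  have h := ((tendsto_nat_floor_mul_div_atTop hc).comp hsqrt).add
    (tendsto_const_nhds (x := d).div_atTop hsqrt)
  rw [add_zero] at h
  exact h.congr fun n => (add_div _ _ _).symm

lemma tendsto_natFloor_mul_sqrt_sub_cube_div_sqrt {c : ℝ} (hc : 0 ≤ c) :
    Tendsto (fun n : ℕ => (⌊c * √n⌋₊ - 2 * (⌊c * √n⌋₊ + 1) ^ 3 / (3 * n)) / √n) atTop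
      (𝓝 (c - 2 / 3 * c ^ 3)) := by
  have h := (tendsto_natFloor_mul_sqrt_add_div_sqrt hc 0).sub
    (((tendsto_natFloor_mul_sqrt_add_div_sqrt hc 1).pow 3).const_mul (2 / 3))
  simp only [add_zero] at h
  refine h.congr' ?_
  filter_upwards [eventually_gt_atTop 0] with n hn
  have hs : 0 < √(n : ℝ) := sqrt_pos.2 (by exact_mod_cast hn)
  have hn' : (n : ℝ) = √n ^ 2 := (sq_sqrt (Nat.cast_nonneg n)).symm
  set s := √(n : ℝ)
  rw [hn']
  field_simp

-- Squared, this reads `π < 32 (0.34 - 2/3 · 0.34³)² ≈ 3.151`: the margin is thin.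
lemma one_fourth_lt_sqrt_two_div_sqrt_pi_mul :
    (1 : ℝ) / 4 < √2 / √π * (0.34 - 2 / 3 * 0.34 ^ 3) := by
  rw [div_mul_eq_mul_div, lt_div_iff₀ (sqrt_pos.2 pi_pos)]
  refine lt_of_pow_lt_pow_left₀ 2 (by positivity) ?_
  rw [mul_pow, mul_pow, sq_sqrt pi_pos.le, sq_sqrt zero_le_two]
  nlinarith [pi_lt_d2]

lemma eventually_two_pow_lt_four_mul_sum_choose_half_add :
    ∀ᶠ n : ℕ in atTop, (2 : ℝ) ^ n < 4 * ∑ j ∈ Icc 1 ⌊0.34 * √n⌋₊, (n.choose (n / 2 + j) : ℝ) := by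
  have hlim := tendsto_sqrt_mul_choose_half_div_two_pow.mul
    (tendsto_natFloor_mul_sqrt_sub_cube_div_sqrt (c := 0.34) (by norm_num))
  filter_upwards [hlim.eventually (eventually_gt_nhds one_fourth_lt_sqrt_two_div_sqrt_pi_mul),
    eventually_gt_atTop 0] with n hlarge hn
  set J := ⌊0.34 * √(n : ℝ)⌋₊
  have hs : 0 < √(n : ℝ) := sqrt_pos.2 (by exact_mod_cast hn)
  calc (2 : ℝ) ^ n = 4 * 2 ^ n * (1 / 4) := by ring
    _ < 4 * 2 ^ n * (√n * n.choose (n / 2) / 2 ^ n * ((J - 2 * (J + 1) ^ 3 / (3 * n)) / √n)) := by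
        gcongr
    _ = 4 * (n.choose (n / 2) * (J - 2 * (J + 1) ^ 3 / (3 * n))) := by
        field_simp
    _ ≤ 4 * ∑ j ∈ Icc 1 J, (n.choose (n / 2 + j) : ℝ) := by
        gcongr
        exact choose_half_mul_le_sum_choose_half_add hn J

lemma eventually_two_pow_pred_le_sum_choose_centralWindow :
    ∀ᶠ n : ℕ in atTop, 2 ^ (n - 1) ≤ ∑ k ∈ centralWindow n (0.34 * √n), n.choose k := by
  filter_upwards [eventually_two_pow_lt_four_mul_sum_choose_half_add, eventually_gt_atTop 0]
    with n hbig hn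
  set J := ⌊0.34 * √(n : ℝ)⌋₊
  have hJt : (J : ℝ) ≤ 0.34 * √n := Nat.floor_le (by positivity)
  have hJn : 2 * J ≤ n := by
    have hsqrt : √(n : ℝ) ≤ n := sqrt_le_self_iff.2 (Or.inr (by exact_mod_cast hn))
    have : (2 * J : ℝ) ≤ n := by linarith [sqrt_nonneg (n : ℝ)]
    exact_mod_cast this
  have hbig' : 2 ^ n < 4 * ∑ j ∈ Icc 1 J, n.choose (n / 2 + j) := by exact_mod_cast hbig
  have hwindow := two_mul_sum_choose_half_add_le_sum_choose_centralWindow hJn hJt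
  have hpow : 2 ^ n = 2 * 2 ^ (n - 1) := by rw [← pow_succ', Nat.sub_add_cancel hn]
  omega

/-- For every even `q = 2r` with `r ≥ 1`, there exists `N` such that
for all `n ≥ N`, the number of `q`-ary sequences of length `n` whose
lower-half-symbol count lies in `[n/2 - 0.34√n, n/2 + 0.34√n]` is at least `q^(n-1)`. -/
theorem exists_N_card_polarity_balanced_ge (r : ℕ) (hr : 1 ≤ r) :
    ∃ N : ℕ, ∀ n : ℕ, N ≤ n →
      (2 * r) ^ (n - 1) ≤ Nat.card {x : Fin n → Fin (2 * r) //
        (n : ℝ) / 2 - 0.34 * Real.sqrt n ≤ ((Finset.univ.filter fun j => (x j : ℕ) < r).card : ℝ) ∧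
        ((Finset.univ.filter fun j => (x j : ℕ) < r).card : ℝ) ≤ (n : ℝ) / 2 + 0.34 * Real.sqrt n} := by
  obtain ⟨N, hN⟩ := eventually_atTop.1 eventually_two_pow_pred_le_sum_choose_centralWindow
  refine ⟨N, fun n hn => ?_⟩
  calc (2 * r) ^ (n - 1) = 2 ^ (n - 1) * r ^ (n - 1) := mul_pow 2 r (n - 1)
    _ ≤ r ^ n * ∑ k ∈ centralWindow n (0.34 * √n), n.choose k := by
        rw [mul_comm]
        exact Nat.mul_le_mul (Nat.pow_le_pow_right hr (Nat.sub_le n 1)) (hN n hn)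
    _ = _ := (card_subtype_card_lowerPositions n r _).symm
end

section
/- Let p ∈ (0,1) and let x and y be two distinct binary sequences of the same length n. Then the arithmetic-coding intervals I(x) = [ℓ(x), ℓ(x)+s(x)) and I(y) = [ℓ(y), ℓ(y)+s(y)) are disjoint. In particular, the map sending a binary sequence of length n to its arithmetic-coding interval is injective. -/
/-- One step of binary arithmetic coding: from state `(ℓ, s)`, bit `0` (false) gives
`(ℓ, p·s)` and bit `1` (true) gives `(ℓ + p·s, (1-p)·s)`. -/
def acStep (p : ℝ) (st : ℝ × ℝ) (b : Bool) : ℝ × ℝ :=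
  if b then (st.1 + p * st.2, (1 - p) * st.2) else (st.1, p * st.2)

/-- The arithmetic-coding state `(ℓ(x), s(x))` of a binary sequence `x`, obtained by
reading the bits left to right starting from `(0, 1)`. -/
def acState (p : ℝ) (x : List Bool) : ℝ × ℝ := x.foldl (acStep p) (0, 1)

/-- The arithmetic-coding interval `I(x) = [ℓ(x), ℓ(x) + s(x))`. -/
def acInterval (p : ℝ) (x : List Bool) : Set ℝ :=
  Set.Ico (acState p x).1 ((acState p x).1 + (acState p x).2)

lemma acFoldl_affine (p : ℝ) (x : List Bool) : ∀ st : ℝ × ℝ,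
    List.foldl (acStep p) st x =
      (st.1 + st.2 * (acState p x).1, st.2 * (acState p x).2) := by
  induction x with
  | nil => intro st; simp [acState]
  | cons a x ih =>
    intro st
    have h1 : List.foldl (acStep p) st (a :: x) = List.foldl (acStep p) (acStep p st a) x := rfl
    have h2 : acState p (a :: x) = List.foldl (acStep p) (acStep p (0,1) a) x := rfl
    rw [h1, ih (acStep p st a), h2, ih (acStep p (0,1) a)]
    cases a <;> simp [acStep] <;> constructor <;> ring

lemma acState_bounds (p : ℝ) (hp : p ∈ Set.Ioo (0 : ℝ) 1) (x : List Bool) :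
    0 ≤ (acState p x).1 ∧ 0 < (acState p x).2 ∧ (acState p x).1 + (acState p x).2 ≤ 1 := by
  obtain ⟨hp0, hp1⟩ := hp
  induction x with
  | nil => simp [acState]
  | cons a x ih =>
    obtain ⟨h1, h2, h3⟩ := ih
    have h : acState p (a :: x) = List.foldl (acStep p) (acStep p (0,1) a) x := rfl
    rw [h, acFoldl_affine p x (acStep p (0,1) a)]
    cases a <;> simp [acStep] <;> constructor
    · positivity
    · constructor
      · positivity
      · nlinarith
    · nlinarith
    · constructor
      · nlinarith
      · nlinarith

lemma acAffineMinMax (c r l1 s1 l2 s2 : ℝ) (hr : 0 < r)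
    (h : min (l1 + s1) (l2 + s2) ≤ max l1 l2) :
    min (c + r * l1 + r * s1) (c + r * l2 + r * s2) ≤ max (c + r * l1) (c + r * l2) := by
  have hmin : min (c + r * l1 + r * s1) (c + r * l2 + r * s2)
      = c + r * min (l1 + s1) (l2 + s2) := by
    rcases le_total (l1 + s1) (l2 + s2) with h1 | h1
    · rw [min_eq_left h1, min_eq_left (by nlinarith)]; try ring
    · rw [min_eq_right h1, min_eq_right (by nlinarith)]; try ring
  have hmax : max (c + r * l1) (c + r * l2) = c + r * max l1 l2 := by
    rcases le_total l1 l2 with h2 | h2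
    · rw [max_eq_right h2, max_eq_right (by nlinarith)]; try ring
    · rw [max_eq_left h2, max_eq_left (by nlinarith)]; try ring
  rw [hmin, hmax]
  nlinarith [mul_le_mul_of_nonneg_left h hr.le]

lemma acDisjoint (p : ℝ) (hp : p ∈ Set.Ioo (0 : ℝ) 1) :
    ∀ x y : List Bool, x.length = y.length → x ≠ y →
      Disjoint (acInterval p x) (acInterval p y) := by
  obtain ⟨hp0, hp1⟩ := hp
  intro x
  induction x with
  | nil =>
    intro y hlen hne
    cases y with
    | nil => exact absurd rfl hne
    | cons b y => simp at hlen
  | cons a x ih =>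
    intro y hlen hne
    cases y with
    | nil => simp at hlen
    | cons b y =>
      simp only [List.length_cons, Nat.succ_inj] at hlen
      obtain ⟨hx1, hx2, hx3⟩ := acState_bounds p ⟨hp0, hp1⟩ x
      obtain ⟨hy1, hy2, hy3⟩ := acState_bounds p ⟨hp0, hp1⟩ y
      have hxs : acState p (a :: x) = List.foldl (acStep p) (acStep p (0,1) a) x := rfl
      have hys : acState p (b :: y) = List.foldl (acStep p) (acStep p (0,1) b) y := rfl
      unfold acInterval
      rw [hxs, hys, acFoldl_affine p x, acFoldl_affine p y, Set.Ico_disjoint_Ico]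
      set l1 := (acState p x).1 with hl1
      set s1 := (acState p x).2 with hs1
      set l2 := (acState p y).1 with hl2
      set s2 := (acState p y).2 with hs2
      have key : a = b → min (l1 + s1) (l2 + s2) ≤ max l1 l2 := by
        intro hab
        have hne' : x ≠ y := fun h => hne (by rw [h, hab])
        have hdisj := ih y hlen hne'
        unfold acInterval at hdisj
        rw [Set.Ico_disjoint_Ico, ← hl1, ← hs1, ← hl2, ← hs2] at hdisj
        rcases le_total (l1 + s1) (l2 + s2) with h | h <;>
          rcases le_total l1 l2 with h' | h' <;>
          rcases min_cases (l1 + s1) (l2 + s2) with ⟨e1, _⟩ | ⟨e1, _⟩ <;>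
          rcases max_cases l1 l2 with ⟨e2, _⟩ | ⟨e2, _⟩ <;>
          rw [e1, e2] at hdisj ⊢ <;> linarith
      cases a <;> cases b <;> simp only [acStep, if_true, if_false, Bool.false_eq_true,
        cond_false, cond_true] <;> simp only [mul_one, zero_add]
      · -- false, false
        simpa using acAffineMinMax 0 p l1 s1 l2 s2 hp0 (key rfl)
      · -- false, true
        calc min (p * l1 + p * s1) (p + (1 - p) * l2 + (1 - p) * s2)
            ≤ p * l1 + p * s1 := min_le_left _ _
          _ ≤ p + (1 - p) * l2 := by nlinarith
          _ ≤ max (p * l1) (p + (1 - p) * l2) := le_max_right _ _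
      · -- true, false
        calc min (p + (1 - p) * l1 + (1 - p) * s1) (p * l2 + p * s2)
            ≤ p * l2 + p * s2 := min_le_right _ _
          _ ≤ p + (1 - p) * l1 := by nlinarith
          _ ≤ max (p + (1 - p) * l1) (p * l2) := le_max_left _ _
      · -- true, true
        exact acAffineMinMax p (1 - p) l1 s1 l2 s2 (by linarith) (key rfl)

/-- For `p ∈ (0,1)`, distinct binary sequences of the same length are
mapped to disjoint arithmetic-coding intervals; in particular the map from binary
sequences of length `n` to their intervals is injective. -/
theorem acInterval_disjoint_and_injective (p : ℝ) (hp : p ∈ Set.Ioo (0 : ℝ) 1) (n : ℕ) :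
    (∀ x y : List Bool, x.length = n → y.length = n → x ≠ y →
      Disjoint (acInterval p x) (acInterval p y)) ∧
    Function.Injective (fun x : {l : List Bool // l.length = n} => acInterval p x.1) := by
  constructor
  · intro x y hx hy hne
    exact acDisjoint p hp x y (hx.trans hy.symm) hne
  · rintro ⟨x, hx⟩ ⟨y, hy⟩ heq
    simp only at heq
    by_contra hne
    have hne' : x ≠ y := fun h => hne (Subtype.ext h)
    have hd := acDisjoint p hp x y (hx.trans hy.symm) hne'
    rw [heq, disjoint_self] at hd
    have hnonempty : (acInterval p y).Nonempty := by
      obtain ⟨h1, h2, h3⟩ := acState_bounds p hp y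
      exact ⟨(acState p y).1, le_refl _, by linarith⟩
    exact hnonempty.ne_empty hd
end
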